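/- Suppose the CP-net N' is obtained from the CP-net N by an iterated elimination of strictly dominated elements, i.e., N →*_S N'. Then an outcome s of N' is an optimal outcome of N if and only if it is an optimal outcome of N'. Moreover, if each variable of N' has a singleton domain, then the unique outcome of N' is the unique optimal outcome of N. -/

import Mathlib

/-- A CP-net over a finite set of variables `ι`, with variable values drawn from `V`.
`dom i` is the (finite, non-empty) domain of variable `i`, `parents i` its set of
parent variables.  `pref i a x y` means: in the (unique) preference statement for
variable `i` determined by the restriction of the assignment `a` to `parents i`,
the value `x` is strictly preferred to the value `y`.  Preference statements exist
only for assignments with all values in the domains, and order only domain values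
(`pref_dom`), depend only on the values of the parents (`pref_local`), and are
strict linear orders on `dom i` (`pref_irrefl`, `pref_trans`, `pref_total`). -/
structure CPNet (ι V : Type*) where
  dom : ι → Finset V
  dom_nonempty : ∀ i, (dom i).Nonempty
  parents : ι → Finset ι
  not_self_parent : ∀ i, i ∉ parents i
  pref : ι → (ι → V) → V → V → Prop
  pref_dom : ∀ i a x y, pref i a x y → (∀ j, a j ∈ dom j) ∧ x ∈ dom i ∧ y ∈ dom i
  pref_local : ∀ i a b, (∀ j, a j ∈ dom j) → (∀ j, b j ∈ dom j) →
      (∀ j ∈ parents i, a j = b j) → pref i a = pref i b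
  pref_irrefl : ∀ i a x, ¬ pref i a x x
  pref_trans : ∀ i a x y z, pref i a x y → pref i a y z → pref i a x z
  pref_total : ∀ i a, (∀ j, a j ∈ dom j) →
      ∀ x ∈ dom i, ∀ y ∈ dom i, x = y ∨ pref i a x y ∨ pref i a y x

/-- A strategic game with parametrized preferences: each player `i` has a finite
non-empty set `strat i` of strategies, and for each joint strategy of his opponents
a strict linear order on his own strategies.  `pref i s x y` means: given the joint
strategy `s` (only its components other than `i` matter, cf. `pref_indep`), player
`i` strictly prefers his strategy `x` to `y`. -/
structure ParamGame (ι V : Type*) where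
  strat : ι → Finset V
  strat_nonempty : ∀ i, (strat i).Nonempty
  pref : ι → (ι → V) → V → V → Prop
  pref_dom : ∀ i s x y, pref i s x y → (∀ j, s j ∈ strat j) ∧ x ∈ strat i ∧ y ∈ strat i
  pref_indep : ∀ i s t, (∀ j, s j ∈ strat j) → (∀ j, t j ∈ strat j) →
      (∀ j, j ≠ i → s j = t j) → pref i s = pref i t
  pref_irrefl : ∀ i s x, ¬ pref i s x x
  pref_trans : ∀ i s x y z, pref i s x y → pref i s y z → pref i s x z
  pref_total : ∀ i s, (∀ j, s j ∈ strat j) →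
      ∀ x ∈ strat i, ∀ y ∈ strat i, x = y ∨ pref i s x y ∨ pref i s y x

namespace CPNet

variable {ι V : Type*}

/-- An outcome of a CP-net: an assignment of a domain value to each variable. -/
def Valid (N : CPNet ι V) (s : ι → V) : Prop := ∀ i, s i ∈ N.dom i

/-- A worsening flip from outcome `s` to outcome `t`: they differ in (at most) the value
of one variable `i`, and the value of `i` in `s` is strictly preferred to its value in
`t` according to the unique preference statement for `i` determined by the values of the
parents of `i` (on which `s` and `t` agree). -/
def WFlip (N : CPNet ι V) (s t : ι → V) : Prop :=
  N.Valid s ∧ N.Valid t ∧ ∃ i, (∀ j, j ≠ i → s j = t j) ∧ N.pref i s (s i) (t i)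

/-- `s` is better than `t` iff there is a nonempty chain of worsening flips from `s` to `t`. -/
def Better (N : CPNet ι V) (s t : ι → V) : Prop := Relation.TransGen N.WFlip s t

/-- An optimal outcome: a (valid) outcome such that no better outcome exists. -/
def Optimal (N : CPNet ι V) (s : ι → V) : Prop := N.Valid s ∧ ∀ t, ¬ N.Better t s

end CPNet

namespace ParamGame

variable {ι V : Type*}

/-- A joint strategy of the game. -/
def Valid (G : ParamGame ι V) (s : ι → V) : Prop := ∀ i, s i ∈ G.strat i

/-- A joint strategy `s` is a (pure) Nash equilibrium iff for every player `i` and every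
strategy `v` of player `i`, either `s i` is strictly preferred to `v` (given the joint
strategy `s` of the opponents) or `s i = v`. -/
def NashEq (G : ParamGame ι V) (s : ι → V) : Prop :=
  G.Valid s ∧ ∀ i, ∀ v ∈ G.strat i, G.pref i s (s i) v ∨ s i = v

end ParamGame

/-- The game `G(N)` associated with a CP-net `N`: players are the variables, the
strategies of player `i` are the domain values of variable `i`, and the preference of
player `i` parametrized by a joint strategy of his opponents is the one given by the
unique preference statement for `i` determined by the values of the parents of `i`. -/
def CPNet.toGame {ι V : Type*} (N : CPNet ι V) : ParamGame ι V where
  strat := N.dom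
  strat_nonempty := N.dom_nonempty
  pref := N.pref
  pref_dom := N.pref_dom
  pref_indep := fun i s t hs ht h =>
    N.pref_local i s t hs ht (fun j hj =>
      h j (fun hji => N.not_self_parent i (hji ▸ hj)))
  pref_irrefl := N.pref_irrefl
  pref_trans := N.pref_trans
  pref_total := N.pref_total

/-- The CP-net `N(G)` associated with a game `G`: variables are the players, the domain
of variable `i` is the strategy set of player `i`, the parents of `i` are all the other
variables, and the preference statement for `i` given a joint strategy of the opponents
is the parametrized preference of player `i`. -/
def ParamGame.toCPNet {ι V : Type*} [Fintype ι] [DecidableEq ι]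
    (G : ParamGame ι V) : CPNet ι V where
  dom := G.strat
  dom_nonempty := G.strat_nonempty
  parents := fun i => Finset.univ.erase i
  not_self_parent := fun i => Finset.notMem_erase i _
  pref := G.pref
  pref_dom := G.pref_dom
  pref_local := fun i a b ha hb h =>
    G.pref_indep i a b ha hb (fun j hj =>
      h j (Finset.mem_erase.2 ⟨hj, Finset.mem_univ j⟩))
  pref_irrefl := G.pref_irrefl
  pref_trans := G.pref_trans
  pref_total := G.pref_total

namespace CPNet

variable {ι V : Type*}

/-- `Y` is a redundant parent of variable `i`: for every assignment (with values in the
domains) and any two domain values `y₁, y₂` of `Y`, the preference statements for `i`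
determined by overwriting the value of `Y` with `y₁` resp. `y₂` coincide. -/
def Redundant [DecidableEq ι] (N : CPNet ι V) (i Y : ι) : Prop :=
  ∀ a, N.Valid a → ∀ y₁ ∈ N.dom Y, ∀ y₂ ∈ N.dom Y,
    N.pref i (Function.update a Y y₁) = N.pref i (Function.update a Y y₂)

/-- `N.RemovesParent N' i Y y₀` : the CP-net `N'` is obtained from `N` by removing `Y`
from the parents of `i` and replacing the family of preference statements for `i`
(for the various values of `Y`) by the single one obtained by fixing the value `y₀`
of `Y`; everything else is unchanged. -/
def RemovesParent [DecidableEq ι] (N N' : CPNet ι V) (i Y : ι) (y₀ : V) : Prop :=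
  N'.dom = N.dom ∧
  N'.parents = Function.update N.parents i ((N.parents i).erase Y) ∧
  (∀ a x y, N'.pref i a x y ↔ (N.Valid a ∧ N.pref i (Function.update a Y y₀) x y)) ∧
  (∀ j, j ≠ i → N'.pref j = N.pref j)

/-- One step of reduction of a CP-net: removal of one redundant parent. -/
def ReduceStep [DecidableEq ι] (N N' : CPNet ι V) : Prop :=
  ∃ i Y, Y ∈ N.parents i ∧ N.Redundant i Y ∧ ∃ y₀ ∈ N.dom Y, N.RemovesParent N' i Y y₀

/-- A CP-net is reduced iff no parent set contains a redundant variable. -/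
def IsReduced [DecidableEq ι] (N : CPNet ι V) : Prop :=
  ∀ i Y, Y ∈ N.parents i → ¬ N.Redundant i Y

/-- `N'` is a subnet of `N`: it is obtained from `N` by removing some elements from some
variable domains, together with all preference statements referring to a removed element
(the remaining preference statements being restricted to the remaining domain values). -/
def Subnet (N' N : CPNet ι V) : Prop :=
  (∀ i, N'.dom i ⊆ N.dom i) ∧
  N'.parents = N.parents ∧
  (∀ i a x y, N'.pref i a x y ↔
      (N.pref i a x y ∧ N'.Valid a ∧ x ∈ N'.dom i ∧ y ∈ N'.dom i))

/-- `d` is a best response to the preference statement for variable `i` determined by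
the assignment `a`: it is weakly preferred to every domain value of `i`. -/
def BestResponseTo (N : CPNet ι V) (i : ι) (d : V) (a : ι → V) : Prop :=
  ∀ d' ∈ N.dom i, N.pref i a d d' ∨ d = d'

/-- `d` is never a best response for variable `i`: it is a best response to no
preference statement for `i`. -/
def NeverBestResponse (N : CPNet ι V) (i : ι) (d : V) : Prop :=
  ∀ a, N.Valid a → ¬ N.BestResponseTo i d a

/-- `N →_NBR N'` : `N'` is a proper subnet of `N` and every removed domain element is
never a best response in `N`. -/
def NBRStep (N N' : CPNet ι V) : Prop :=
  N ≠ N' ∧ N'.Subnet N ∧ ∀ i, ∀ d ∈ N.dom i, d ∉ N'.dom i → N.NeverBestResponse i d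

/-- `d'` is strictly dominated (by some domain element `d`) for variable `i`: `d` is
strictly preferred to `d'` in every preference statement for `i`. -/
def StrictlyDominated (N : CPNet ι V) (i : ι) (d' : V) : Prop :=
  ∃ d ∈ N.dom i, ∀ a, N.Valid a → N.pref i a d d'

/-- `N →_S N'` : `N'` is a proper subnet of `N` and every removed domain element is
strictly dominated in `N`. -/
def SStep (N N' : CPNet ι V) : Prop :=
  N ≠ N' ∧ N'.Subnet N ∧ ∀ i, ∀ d ∈ N.dom i, d ∉ N'.dom i → N.StrictlyDominated i d

/-- A CP-net is acyclic iff its dependency graph (with an edge from each parent to its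
child) has no directed cycle. -/
def Acyclic (N : CPNet ι V) : Prop :=
  ∀ i, ¬ Relation.TransGen (fun a b : ι => a ∈ N.parents b) i i

end CPNet

section Aux

variable {ι V : Type*}

/-- In any finite nonempty subset of the domain of `i` there is a top element with
respect to the (strict linear) preference order determined by a valid assignment. -/
lemma exists_pref_max (N : CPNet ι V) (i : ι) (a : ι → V) (ha : N.Valid a)
    (T : Finset V) (hsub : ∀ x ∈ T, x ∈ N.dom i) (hT : T.Nonempty) :
    ∃ m ∈ T, ∀ d ∈ T, d = m ∨ N.pref i a m d := by
  classical
  induction T using Finset.induction_on with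
  | empty => exact absurd hT (by simp)
  | @insert x T hx ih =>
    rcases T.eq_empty_or_nonempty with rfl | hTne
    · exact ⟨x, by simp, by simp⟩
    · obtain ⟨m, hmT, hm⟩ := ih (fun y hy => hsub y (Finset.mem_insert_of_mem hy)) hTne
      have hxd : x ∈ N.dom i := hsub x (Finset.mem_insert_self x T)
      have hmd : m ∈ N.dom i := hsub m (Finset.mem_insert_of_mem hmT)
      rcases N.pref_total i a ha x hxd m hmd with heq | hxm | hmx
      · refine ⟨m, Finset.mem_insert_of_mem hmT, ?_⟩
        intro d hd
        rcases Finset.mem_insert.1 hd with rfl | hd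
        · exact Or.inl heq
        · exact hm d hd
      · -- x preferred to m : x is the top
        refine ⟨x, Finset.mem_insert_self x T, ?_⟩
        intro d hd
        rcases Finset.mem_insert.1 hd with rfl | hd
        · exact Or.inl rfl
        · rcases hm d hd with rfl | hmd'
          · exact Or.inr hxm
          · exact Or.inr (N.pref_trans i a x m d hxm hmd')
      · -- m preferred to x : m remains the top
        refine ⟨m, Finset.mem_insert_of_mem hmT, ?_⟩
        intro d hd
        rcases Finset.mem_insert.1 hd with rfl | hd
        · exact Or.inr hmx
        · exact hm d hd

/-- The key one-step lemma: a single `→_S` step preserves optimality of outcomes of the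
smaller net, and every optimal outcome of the bigger net survives. -/
lemma sStep_key {N N' : CPNet ι V} (h : CPNet.SStep N N') :
    (∀ s, N'.Valid s → (N.Optimal s ↔ N'.Optimal s)) ∧
    (∀ t, N.Optimal t → N'.Valid t) := by
  classical
  obtain ⟨-, ⟨hdom, hpar, hpref⟩, helim⟩ := h
  have hvalid : ∀ s, N'.Valid s → N.Valid s := fun s hs i => hdom i (hs i)
  have hflip : ∀ a b, N'.WFlip a b → N.WFlip a b := by
    rintro a b ⟨hav, hbv, i, hij, hp⟩
    exact ⟨hvalid a hav, hvalid b hbv, i, hij, ((hpref i a (a i) (b i)).1 hp).1⟩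
  constructor
  · intro s hs
    constructor
    · rintro ⟨hsv, hopt⟩
      exact ⟨hs, fun t ht => hopt t (Relation.TransGen.mono hflip _ _ ht)⟩
    · rintro ⟨hsv, hopt⟩
      refine ⟨hvalid s hs, fun t ht => ?_⟩
      -- extract the last worsening flip `u → s` of the chain
      have hlast : ∃ u, N.WFlip u s := by
        cases ht with
        | single h1 => exact ⟨t, h1⟩
        | tail _ h1 => exact ⟨_, h1⟩
      obtain ⟨u, huv, hsv', i, huj, hup⟩ := hlast
      -- find a value of variable `i` in `N'.dom i` preferred (in `N`, at `u`) to `s i`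
      have hmain : ∃ m ∈ N'.dom i, N.pref i u m (s i) := by
        by_cases hui : u i ∈ N'.dom i
        · exact ⟨u i, hui, hup⟩
        · -- `u i` was eliminated: find a surviving uniform dominator
          obtain ⟨d, hd, hdall⟩ := helim i (u i) (huv i) hui
          set T : Finset V :=
            (N.dom i).filter (fun d => ∀ a, N.Valid a → N.pref i a d (u i)) with hT
          have hdT : d ∈ T := Finset.mem_filter.2 ⟨hd, hdall⟩
          obtain ⟨m, hmT, hm⟩ := exists_pref_max N i u huv T
            (fun x hxx => (Finset.mem_filter.1 hxx).1) ⟨d, hdT⟩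
          have hmdom : m ∈ N.dom i := (Finset.mem_filter.1 hmT).1
          have hmall : ∀ a, N.Valid a → N.pref i a m (u i) :=
            (Finset.mem_filter.1 hmT).2
          have hm' : m ∈ N'.dom i := by
            by_contra hmn
            obtain ⟨e, he, heall⟩ := helim i m hmdom hmn
            have heT : e ∈ T := Finset.mem_filter.2
              ⟨he, fun a hav => N.pref_trans i a e m (u i) (heall a hav) (hmall a hav)⟩
            rcases hm e heT with rfl | hme
            · exact N.pref_irrefl i u e (heall u huv)
            · exact N.pref_irrefl i u m (N.pref_trans i u m e m hme (heall u huv))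
          exact ⟨m, hm', N.pref_trans i u m (u i) (s i) (hmall u huv) hup⟩
      obtain ⟨m, hm', hmp⟩ := hmain
      -- the flip `update s i m → s` is a worsening flip of `N'`, contradicting optimality
      set v : ι → V := Function.update s i m with hv
      have hvvalid' : N'.Valid v := by
        intro j
        by_cases hji : j = i
        · subst hji; simpa [hv] using hm'
        · simpa [hv, Function.update_of_ne hji] using hs j
      have hvvalid : N.Valid v := hvalid v hvvalid'
      have hvu : N.pref i v = N.pref i u := by
        apply N.pref_local i v u hvvalid huv
        intro j hj
        have hji : j ≠ i := fun hji => N.not_self_parent i (hji ▸ hj)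
        rw [hv, Function.update_of_ne hji, huj j hji]
      have hvp : N.pref i v m (s i) := by rw [hvu]; exact hmp
      have hvp' : N'.pref i v (v i) (s i) := by
        rw [hpref]
        refine ⟨?_, hvvalid', ?_, hs i⟩
        · simpa [hv] using hvp
        · simpa [hv] using hm'
      exact hopt v (Relation.TransGen.single
        ⟨hvvalid', hs, i, fun j hji => Function.update_of_ne hji m s, hvp'⟩)
  · -- optimal outcomes of `N` survive the elimination
    rintro t ⟨htv, hopt⟩ i
    by_contra hti
    obtain ⟨d, hd, hdall⟩ := helim i (t i) (htv i) hti
    set t' : ι → V := Function.update t i d with ht'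
    have ht'v : N.Valid t' := by
      intro j
      by_cases hji : j = i
      · subst hji; simpa [ht'] using hd
      · simpa [ht', Function.update_of_ne hji] using htv j
    have hloc : N.pref i t' = N.pref i t := by
      apply N.pref_local i t' t ht'v htv
      intro j hj
      have hji : j ≠ i := fun hji => N.not_self_parent i (hji ▸ hj)
      rw [ht', Function.update_of_ne hji]
    have : N.pref i t' (t' i) (t i) := by
      rw [hloc]; simpa [ht'] using hdall t htv
    exact hopt t' (Relation.TransGen.single
      ⟨ht'v, htv, i, fun j hji => Function.update_of_ne hji d t, this⟩)

end Aux

/-- If `N →*_S N'`, i.e. the CP-net `N'` is obtained from the CP-net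
`N` by an iterated elimination of strictly dominated elements, then an outcome `s` of
`N'` is an optimal outcome of `N` iff it is an optimal outcome of `N'`; moreover, if
each variable of `N'` has a singleton domain, then the unique outcome of `N'` is the
unique optimal outcome of `N`. -/
theorem optimal_of_sSteps {ι V : Type*} (N N' : CPNet ι V)
    (h : Relation.ReflTransGen CPNet.SStep N N') :
    (∀ s, N'.Valid s → (N.Optimal s ↔ N'.Optimal s)) ∧
    ((∀ i, ∃ v, N'.dom i = {v}) →
      ∀ s, N'.Valid s → N.Optimal s ∧ ∀ t, N.Optimal t → t = s) := by
  have key : (∀ s, N'.Valid s → (N.Optimal s ↔ N'.Optimal s)) ∧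
      (∀ t, N.Optimal t → N'.Valid t) := by
    induction h with
    | refl => exact ⟨fun s _ => Iff.rfl, fun t ht => ht.1⟩
    | tail hchain hstep ih =>
      obtain ⟨L1, L2⟩ := sStep_key hstep
      refine ⟨fun s hs => ?_, fun t ht => ?_⟩
      · have hsM := fun i => hstep.2.1.1 i (hs i)
        exact (ih.1 s hsM).trans (L1 s hs)
      · exact L2 t ((ih.1 t (ih.2 t ht)).mp ht)
  refine ⟨key.1, fun hsing s hs => ?_⟩
  have hnoflip : ∀ a b, ¬ N'.WFlip a b := by
    rintro a b ⟨hav, hbv, i, hij, hp⟩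
    obtain ⟨-, hai, hbi⟩ := N'.pref_dom i a (a i) (b i) hp
    obtain ⟨v, hv⟩ := hsing i
    rw [hv, Finset.mem_singleton] at hai hbi
    rw [hai, hbi] at hp
    exact N'.pref_irrefl i a v hp
  have hopt' : N'.Optimal s := by
    refine ⟨hs, fun t ht => ?_⟩
    cases ht with
    | single h1 => exact hnoflip _ _ h1
    | tail _ h1 => exact hnoflip _ _ h1
  refine ⟨(key.1 s hs).mpr hopt', fun t ht => ?_⟩
  have htv : N'.Valid t := key.2 t ht
  funext i
  obtain ⟨v, hv⟩ := hsing i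
  have h1 := htv i
  have h2 := hs i
  rw [hv, Finset.mem_singleton] at h1 h2
  rw [h1, h2]
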